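/- arXiv:2510.05422 — 2 statements merged into one kernel-verified Lean document; each statement's English description precedes it below -/
import Mathlib

section
/- Fix integers s ≥ 1, r ≥ 3 and 1 ≤ p ≤ q with r = p+q ≤ s. Let g(s, r−1, p, q) denote the maximum number of hyperedges of an (r−1)-graph on s vertices whose 2-shadow contains no copy of K_{p,q}. Then there exist a constant K and n₀ such that for all n ≥ n₀, | ex_r(n, BM_{s+1} ∪ BK_{p,q}) − min{p−1, g(s, r−1, p, q)}·n | ≤ K. -/
open Finset

/-- `H` is an `r`-uniform hypergraph (an `r`-graph): every hyperedge has exactly `r` vertices. -/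
def IsUniform {V : Type*} (r : ℕ) (H : Finset (Finset V)) : Prop :=
  ∀ e ∈ H, e.card = r

/-- `H` contains a Berge copy of the graph with edge set `F`: there are an injection `g`
of the vertices of `F` into the vertices of `H` and an injection `φ` of the edges of `F`
into the hyperedges of `H` such that `g '' e ⊆ φ e` for every edge `e` of `F`. -/
def ContainsBerge {α V : Type*} [DecidableEq α] [DecidableEq V]
    (F : Finset (Finset α)) (H : Finset (Finset V)) : Prop :=
  ∃ (g : α → V) (φ : Finset α → Finset V),
    Function.Injective g ∧ Set.InjOn φ ↑F ∧
      (∀ e ∈ F, φ e ∈ H) ∧ ∀ e ∈ F, e.image g ⊆ φ e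

/-- `H` contains a copy (a subhypergraph isomorphic to) of the hypergraph with
vertex set `A` and edge set `F`. -/
def ContainsCopy {α V : Type*} [DecidableEq α] [DecidableEq V]
    (A : Finset α) (F : Finset (Finset α)) (H : Finset (Finset V)) : Prop :=
  ∃ g : α → V, Set.InjOn g ↑A ∧ ∀ e ∈ F, e.image g ∈ H

/-- The edge set of the matching `M_t` consisting of `t` pairwise disjoint edges. -/
def matchingHG (t : ℕ) : Finset (Finset (Fin t × Fin 2)) :=
  Finset.univ.image fun i : Fin t => ({(i, 0), (i, 1)} : Finset (Fin t × Fin 2))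

/-- The Turán number: the maximum number of hyperedges in an `r`-graph on `n` vertices
satisfying the freeness predicate `Free`. -/
noncomputable def exr (n r : ℕ) (Free : Finset (Finset (Fin n)) → Prop) : ℕ :=
  sSup {m | ∃ H : Finset (Finset (Fin n)), IsUniform r H ∧ Free H ∧ H.card = m}

/-- The edge set of the complete bipartite graph `K_{p,q}`. -/
def completeBipartite (p q : ℕ) : Finset (Finset (Fin p ⊕ Fin q)) :=
  (Finset.univ ×ˢ Finset.univ).image
    fun x : Fin p × Fin q => ({Sum.inl x.1, Sum.inr x.2} : Finset (Fin p ⊕ Fin q))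

/-- The `2`-shadow of a hypergraph: the graph whose edges are the `2`-element sets
contained in some hyperedge. -/
def twoShadow {V : Type*} [Fintype V] [DecidableEq V]
    (H : Finset (Finset V)) : Finset (Finset V) :=
  ((Finset.univ : Finset V).powersetCard 2).filter fun e => ∃ f ∈ H, e ⊆ f

/-!
Lower bound: fix an `s`-set `S` and an `(r-1)`-graph `G` on `S` with `min (p-1) g` edges whose
shadow is `K_{p,q}`-free, and join every vertex outside `S` to every edge of `G`. Each new edge
meets the complement of `S` in one vertex, so a Berge matching has at most `s` edges; a Berge
`K_{p,q}` would need `q ≥ p > |G|` distinct edges through one outside vertex, or a `K_{p,q}` in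
the shadow of `G`.

Upper bound: the vertices of large degree form a set `B` of bounded size, and few edges have two
vertices outside `B`; otherwise a Berge matching of size `s + 1` can be built greedily. Every
other edge not inside `B` is `insert v f` with `v ∉ B` and `f` in the link of `v`, a family of
subsets of `B`. All but boundedly many `v` have at most `min (p-1) g` link members: by
pigeonhole, many vertices with one common link `L` give a Berge `K_{p,q}`, through distinct
representatives of `p` members of `L`, or, when `|L| > g`, through the `K_{p,q}` in the shadow
of `L` (which spans at most `s` vertices, as otherwise there is a Berge matching of size `s + 1`).
-/

open Function

lemma Finset.exists_injective_mem {ι α : Type*} [Fintype ι] {S : Finset α}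
    (h : Fintype.card ι ≤ S.card) : ∃ x : ι → α, Injective x ∧ ∀ i, x i ∈ S := by
  obtain ⟨x⟩ := Function.Embedding.nonempty_of_card_le (α := ι) (β := S) (by simpa using h)
  exact ⟨fun i => x i, Subtype.val_injective.comp x.injective, fun i => (x i).2⟩

lemma Finset.eq_and_eq_of_insert_eq_insert {α : Type*} [DecidableEq α] {a b : α}
    {s t : Finset α} (hs : a ∉ s) (ht : a ∉ t) (h : insert a s = insert b t) :
    a = b ∧ s = t := by
  obtain rfl : a = b := (mem_insert.1 (h ▸ mem_insert_self a s)).resolve_right ht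
  exact ⟨rfl, by rw [← erase_insert hs, h, erase_insert ht]⟩

lemma exists_injective_mem_of_card_le_card {ι α : Type*} [Fintype ι] [DecidableEq α]
    (F : ι → Finset α) (h : ∀ i, Fintype.card ι ≤ (F i).card) :
    ∃ x : ι → α, Injective x ∧ ∀ i, x i ∈ F i := by
  refine (all_card_le_biUnion_card_iff_exists_injective F).1 fun s => ?_
  rcases s.eq_empty_or_nonempty with rfl | ⟨i, hi⟩
  · simp
  · exact (card_le_univ s).trans ((h i).trans (card_le_card (subset_biUnion_of_mem F hi)))

lemma exists_embedding_subset_map {V : Type*} [Fintype V] {A : Finset V} {s : ℕ}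
    (hA : A.card ≤ s) (hs : s ≤ Fintype.card V) : ∃ e : Fin s ↪ V, A ⊆ univ.map e := by
  obtain ⟨S, hAS, -, hS⟩ := exists_subsuperset_card_eq (subset_univ A) hA (by simpa using hs)
  let φ : S ≃ Fin s := Fintype.equivFinOfCardEq (by simpa using hS)
  exact ⟨φ.symm.toEmbedding.trans (.subtype (· ∈ S)),
    fun a ha => mem_map.2 ⟨φ ⟨a, hAS ha⟩, mem_univ _, by simp⟩⟩

lemma injective_snoc_pair {V : Type*} {k : ℕ} {c : Fin k × Fin 2 → V} (hc : Injective c)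
    {a b : V} (hab : a ≠ b) (ha : a ∉ Set.range c) (hb : b ∉ Set.range c) :
    Injective fun x : Fin (k + 1) × Fin 2 =>
      Fin.snoc (α := fun _ => V) (fun i => c (i, x.2)) (![a, b] x.2) x.1 := by
  have hab' : ∀ j j', ![a, b] j = ![a, b] j' → j = j' := by
    simp [Fin.forall_fin_two, hab, hab.symm]
  have hnew : ∀ i j j', c (i, j) ≠ ![a, b] j' := by
    simp only [Set.mem_range, not_exists] at ha hb
    simp [Fin.forall_fin_two, ha, hb]
  rintro ⟨i, j⟩ ⟨i', j'⟩ h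
  induction i using Fin.lastCases <;> induction i' using Fin.lastCases <;>
    simp only [Fin.snoc_last, Fin.snoc_castSucc] at h
  · rw [hab' _ _ h]
  · exact absurd h.symm (hnew _ _ _)
  · exact absurd h (hnew _ _ _)
  · obtain ⟨rfl, rfl⟩ := Prod.ext_iff.1 (hc h)
    rfl

section Turan

variable {n r : ℕ} {Free : Finset (Finset (Fin n)) → Prop}

lemma bddAbove_exr_set :
    BddAbove {m | ∃ H : Finset (Finset (Fin n)), IsUniform r H ∧ Free H ∧ H.card = m} := by
  refine ⟨Fintype.card (Finset (Fin n)), ?_⟩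
  rintro m ⟨H, -, -, rfl⟩
  exact card_le_univ H

lemma nonempty_exr_set (h0 : Free ∅) :
    {m | ∃ H : Finset (Finset (Fin n)), IsUniform r H ∧ Free H ∧ H.card = m}.Nonempty :=
  ⟨0, ∅, fun _ he => absurd he (notMem_empty _), h0, rfl⟩

lemma card_le_exr {H : Finset (Finset (Fin n))} (hH : IsUniform r H) (hFree : Free H) :
    H.card ≤ exr n r Free :=
  le_csSup bddAbove_exr_set ⟨H, hH, hFree, rfl⟩

lemma exr_le {C : ℕ} (h0 : Free ∅) (h : ∀ H, IsUniform r H → Free H → H.card ≤ C) :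
    exr n r Free ≤ C :=
  csSup_le (nonempty_exr_set h0) <| by
    rintro _ ⟨H, hH, hFree, rfl⟩
    exact h H hH hFree

lemma exists_card_eq_exr (h0 : Free ∅) :
    ∃ H, IsUniform r H ∧ Free H ∧ H.card = exr n r Free :=
  Nat.sSup_mem (nonempty_exr_set h0) bddAbove_exr_set

end Turan

section Berge

variable {V : Type*} [DecidableEq V] {H : Finset (Finset V)} {t : ℕ}

lemma containsBerge_image_iff {ι α : Type*} [Fintype ι] [DecidableEq α] {E : ι → Finset α}
    (hE : Injective E) :
    ContainsBerge (univ.image E) H ↔ ∃ (g : α → V) (T : ι → Finset V),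
      Injective g ∧ Injective T ∧ (∀ i, T i ∈ H) ∧ ∀ i, (E i).image g ⊆ T i := by
  constructor
  · rintro ⟨g, φ, hg, hφ, hφH, hgφ⟩
    exact ⟨g, φ ∘ E, hg, fun i j hij => hE (hφ (by simp) (by simp) hij),
      fun i => hφH _ (by simp), fun i => hgφ _ (by simp)⟩
  · rintro ⟨g, T, hg, hT, hTH, hgT⟩
    refine ⟨g, extend E T fun _ => ∅, hg, ?_, ?_, ?_⟩ <;> simp only [coe_image, coe_univ,
      Set.image_univ, Set.InjOn, Set.mem_range, forall_exists_index, forall_mem_image, mem_univ,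
      true_implies, forall_apply_eq_imp_iff, hE.extend_apply]
    · exact fun i j hij => congrArg E (hT hij)
    · exact hTH
    · exact hgT

lemma containsBerge_matchingHG_iff :
    ContainsBerge (matchingHG t) H ↔ ∃ (c : Fin t × Fin 2 → V) (T : Fin t → Finset V),
      Injective c ∧ Injective T ∧ (∀ i, T i ∈ H) ∧ ∀ i j, c (i, j) ∈ T i := by
  rw [matchingHG, containsBerge_image_iff]
  · simp [image_insert, insert_subset_iff, Fin.forall_fin_two]
  · intro i j hij
    simpa using (Finset.ext_iff.1 hij (i, 0)).1 (by simp)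

lemma containsBerge_completeBipartite_iff {p q : ℕ} :
    ContainsBerge (completeBipartite p q) H ↔
      ∃ (g : Fin p ⊕ Fin q → V) (T : Fin p × Fin q → Finset V),
        Injective g ∧ Injective T ∧ (∀ x, T x ∈ H) ∧
          ∀ i j, g (.inl i) ∈ T (i, j) ∧ g (.inr j) ∈ T (i, j) := by
  rw [completeBipartite, univ_product_univ, containsBerge_image_iff]
  · simp [image_insert, insert_subset_iff]
  · rintro ⟨i, j⟩ ⟨i', j'⟩ h
    have hi := (Finset.ext_iff.1 h (.inl i)).1 (by simp)
    have hj := (Finset.ext_iff.1 h (.inr j)).1 (by simp)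
    simp_all

lemma not_containsBerge_empty {α : Type*} [DecidableEq α] {F : Finset (Finset α)}
    (hF : F.Nonempty) : ¬ ContainsBerge F (∅ : Finset (Finset V)) := by
  rintro ⟨-, φ, -, -, hφ, -⟩
  obtain ⟨e, he⟩ := hF
  simpa using hφ e he

/-- `X` and `Y` stand for the vertices and the edges of a partial Berge matching. -/
lemma containsBerge_matchingHG_of_forall_exists
    (h : ∀ (X : Finset V) (Y : Finset (Finset V)), X.card ≤ 2 * t → Y.card < t →
      ∃ e ∈ H, e ∉ Y ∧ 2 ≤ (e \ X).card) :
    ContainsBerge (matchingHG t) H := by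
  rw [containsBerge_matchingHG_iff]
  suffices ∀ k ≤ t, ∃ (c : Fin k × Fin 2 → V) (T : Fin k → Finset V),
      Injective c ∧ Injective T ∧ (∀ i, T i ∈ H) ∧ ∀ i j, c (i, j) ∈ T i from
    this t le_rfl
  intro k
  induction k with
  | zero => exact fun _ => ⟨fun x => x.1.elim0, Fin.elim0, fun x => x.1.elim0,
      fun i => i.elim0, fun i => i.elim0, fun i => i.elim0⟩
  | succ k ih =>
    intro hk
    obtain ⟨c, T, hc, hT, hTH, hcT⟩ := ih (by omega)
    obtain ⟨e, heH, heY, he⟩ := h (univ.image c) (univ.image T)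
      (card_image_le.trans (by simp only [card_univ, Fintype.card_prod, Fintype.card_fin]; omega))
      (card_image_le.trans_lt (by simp only [card_univ, Fintype.card_fin]; omega))
    obtain ⟨a, ha, b, hb, hab⟩ := one_lt_card.1 he
    simp only [mem_sdiff, mem_image, mem_univ, true_and, not_exists] at ha hb heY
    refine ⟨_, Fin.snoc T e, injective_snoc_pair hc hab (by simpa using ha.2)
      (by simpa using hb.2), Fin.snoc_injective_of_injective hT (by simpa using heY),
      fun i => ?_, fun i j => ?_⟩
    · induction i using Fin.lastCases <;> simp [heH, hTH]
    · induction i using Fin.lastCases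
      · fin_cases j <;> simp [ha.1, hb.1]
      · simp [hcT]

lemma not_containsBerge_matchingHG_of_card_sdiff_le_one {S : Finset V}
    (hH : ∀ e ∈ H, (e \ S).card ≤ 1) : ¬ ContainsBerge (matchingHG (S.card + 1)) H := by
  rw [containsBerge_matchingHG_iff]
  rintro ⟨c, T, hc, -, hTH, hcT⟩
  have hS : ∀ i, ∃ j, c (i, j) ∈ S := by
    by_contra! h
    obtain ⟨i, hi⟩ := h
    have : ({c (i, 0), c (i, 1)} : Finset V) ⊆ T i \ S := by
      simp [insert_subset_iff, hcT, hi]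
    have := (card_le_card this).trans (hH _ (hTH i))
    rw [card_pair (hc.ne (by simp))] at this
    omega
  choose j hj using hS
  have := card_le_card_of_injOn (s := univ) (fun i => c (i, j i)) (fun i _ => hj i)
    fun i _ i' _ h => (Prod.ext_iff.1 (hc h)).1
  simp at this

end Berge

section Copy

variable {V W : Type*} [Fintype V] [DecidableEq V] [Fintype W] [DecidableEq W] {p q : ℕ}

lemma containsCopy_completeBipartite_twoShadow_iff {L : Finset (Finset V)} :
    ContainsCopy univ (completeBipartite p q) (twoShadow L) ↔
      ∃ g : Fin p ⊕ Fin q → V, Injective g ∧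
        ∀ i j, ∃ f ∈ L, g (.inl i) ∈ f ∧ g (.inr j) ∈ f := by
  simp only [ContainsCopy, coe_univ, Set.injOn_univ, completeBipartite, univ_product_univ,
    forall_mem_image, mem_univ, true_implies, twoShadow, mem_filter, mem_powersetCard,
    subset_univ, true_and, image_insert, image_singleton, insert_subset_iff,
    singleton_subset_iff, Prod.forall]
  refine exists_congr fun g => and_congr_right fun hg => forall₂_congr fun i j => ?_
  rw [card_pair (hg.ne Sum.inl_ne_inr)]
  simp

lemma not_containsCopy_completeBipartite_twoShadow_empty (hp : 1 ≤ p) (hq : 1 ≤ q) :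
    ¬ ContainsCopy univ (completeBipartite p q) (twoShadow (∅ : Finset (Finset V))) := by
  rw [containsCopy_completeBipartite_twoShadow_iff]
  rintro ⟨g, -, hg⟩
  obtain ⟨f, hf, -⟩ := hg ⟨0, hp⟩ ⟨0, hq⟩
  simp at hf

lemma containsCopy_completeBipartite_twoShadow_image_map_iff (hp : 1 ≤ p) (hq : 1 ≤ q)
    (e : W ↪ V) (L : Finset (Finset W)) :
    ContainsCopy univ (completeBipartite p q) (twoShadow (L.image (·.map e))) ↔
      ContainsCopy univ (completeBipartite p q) (twoShadow L) := by
  simp only [containsCopy_completeBipartite_twoShadow_iff, exists_mem_image]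
  constructor
  · rintro ⟨g, hg, hgL⟩
    have hrange : ∀ a, ∃ w, e w = g a := by
      rintro (i | j)
      · obtain ⟨f, -, hf, -⟩ := hgL i ⟨0, hq⟩
        obtain ⟨w, -, hw⟩ := mem_map.1 hf
        exact ⟨w, hw⟩
      · obtain ⟨f, -, -, hf⟩ := hgL ⟨0, hp⟩ j
        obtain ⟨w, -, hw⟩ := mem_map.1 hf
        exact ⟨w, hw⟩
    choose g' hg' using hrange
    refine ⟨g', fun a b hab => hg (by rw [← hg', ← hg', hab]), fun i j => ?_⟩
    obtain ⟨f, hf, hi, hj⟩ := hgL i j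
    refine ⟨f, hf, ?_, ?_⟩
    · rwa [← hg', mem_map'] at hi
    · rwa [← hg', mem_map'] at hj
  · rintro ⟨g, hg, hgL⟩
    refine ⟨e ∘ g, e.injective.comp hg, fun i j => ?_⟩
    obtain ⟨f, hf, hi, hj⟩ := hgL i j
    exact ⟨f, hf, mem_map_of_mem e hi, mem_map_of_mem e hj⟩

lemma containsCopy_twoShadow_of_exr_lt (hp : 1 ≤ p) (hq : 1 ≤ q) {L : Finset (Finset V)}
    {s r : ℕ} (hs : s ≤ Fintype.card V) (hspan : (L.biUnion id).card ≤ s)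
    (hu : IsUniform r L)
    (hL : exr s r (fun L => ¬ ContainsCopy univ (completeBipartite p q) (twoShadow L)) <
      L.card) :
    ContainsCopy univ (completeBipartite p q) (twoShadow L) := by
  obtain ⟨e, he⟩ := exists_embedding_subset_map hspan hs
  set L' := univ.filter fun f : Finset (Fin s) => f.map e ∈ L
  have hL' : L'.image (·.map e) = L := by
    ext f
    simp only [L', mem_image, mem_filter, mem_univ, true_and]
    refine ⟨fun ⟨f', hf', hf⟩ => hf ▸ hf', fun hf => ?_⟩
    obtain ⟨f', -, rfl⟩ := subset_map_iff.1 ((subset_biUnion_of_mem id hf).trans he)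
    exact ⟨f', hf, rfl⟩
  have hcard : L'.card = L.card := by
    rw [← hL', card_image_of_injective _ (map_injective e)]
  have hu' : IsUniform r L' := fun f hf => by
    simpa using hu _ (mem_filter.1 hf).2
  rw [← hL', containsCopy_completeBipartite_twoShadow_image_map_iff hp hq]
  by_contra hfree
  have := card_le_exr
    (Free := fun L => ¬ ContainsCopy univ (completeBipartite p q) (twoShadow L)) hu' hfree
  omega

end Copy

section Degree

variable {V : Type*} [DecidableEq V] {H : Finset (Finset V)} {t : ℕ}

def degree (H : Finset (Finset V)) (v : V) : ℕ := (H.filter (v ∈ ·)).card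

lemma card_highDegree_le [Fintype V] (hM : ¬ ContainsBerge (matchingHG t) H) :
    (univ.filter fun v => t + 2 ^ (2 * t + 1) ≤ degree H v).card ≤ 2 * t := by
  by_contra! hB
  refine hM (containsBerge_matchingHG_of_forall_exists fun X Y hX hY => ?_)
  obtain ⟨u, huB, huX⟩ := exists_mem_notMem_of_card_lt_card (hX.trans_lt hB)
  have hbad : (Y ∪ (insert u X).powerset).card < (H.filter (u ∈ ·)).card :=
    calc (Y ∪ (insert u X).powerset).card ≤ Y.card + 2 ^ (insert u X).card := by
          rw [← card_powerset]; exact card_union_le _ _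
      _ < t + 2 ^ (2 * t + 1) := Nat.add_lt_add_of_lt_of_le hY
          (Nat.pow_le_pow_right two_pos ((card_insert_le u X).trans (by omega)))
      _ ≤ _ := (mem_filter.1 huB).2
  obtain ⟨e, he, heBad⟩ := exists_mem_notMem_of_card_lt_card hbad
  simp only [mem_union, mem_powerset, not_or] at heBad
  rw [mem_filter] at he
  obtain ⟨b, hbe, hb⟩ := not_subset.1 heBad.2
  rw [mem_insert, not_or] at hb
  refine ⟨e, he.1, heBad.1, ?_⟩
  calc 2 = ({u, b} : Finset V).card := (card_pair (Ne.symm hb.1)).symm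
    _ ≤ (e \ X).card := card_le_card (by simp [insert_subset_iff, he.2, huX, hbe, hb.2])

lemma card_filter_two_le_card_sdiff_le {B : Finset V} {D : ℕ}
    (hM : ¬ ContainsBerge (matchingHG t) H) (hD : ∀ v ∉ B, degree H v ≤ D) :
    (H.filter fun e => 2 ≤ (e \ B).card).card ≤ t + 2 * t * D := by
  by_contra! hE
  refine hM (containsBerge_matchingHG_of_forall_exists fun X Y hX hY => ?_)
  have hbad : (Y ∪ (X \ B).biUnion fun v => H.filter (v ∈ ·)).card <
      (H.filter fun e => 2 ≤ (e \ B).card).card :=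
    calc _ ≤ Y.card + ∑ v ∈ X \ B, degree H v :=
          (card_union_le _ _).trans (by gcongr; exact card_biUnion_le)
      _ ≤ t + (X \ B).card * D := by
          gcongr
          simpa using sum_le_card_nsmul _ _ _ fun v hv => hD v (mem_sdiff.1 hv).2
      _ ≤ t + 2 * t * D := by
          gcongr; exact (card_le_card sdiff_subset).trans hX
      _ < _ := hE
  obtain ⟨e, he, heBad⟩ := exists_mem_notMem_of_card_lt_card hbad
  simp only [mem_union, mem_biUnion, mem_sdiff, mem_filter, not_or, not_exists, not_and]
    at heBad he
  refine ⟨e, he.1, heBad.1, he.2.trans (card_le_card fun x hx => ?_)⟩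
  rw [mem_sdiff] at hx ⊢
  exact ⟨hx.1, fun hxX => heBad.2 x ⟨hxX, hx.2⟩ he.1 hx.1⟩

end Degree

section CommonLink

variable {V : Type*} [DecidableEq V] {H : Finset (Finset V)} {Q : Finset V}
  {L : Finset (Finset V)} {s r p q t : ℕ}

lemma containsBerge_matchingHG_of_link
    (hQL : ∀ v ∈ Q, ∀ f ∈ L, v ∉ f ∧ insert v f ∈ H) (hQ : t ≤ Q.card)
    (hL : t ≤ (L.biUnion id).card) :
    ContainsBerge (matchingHG t) H := by
  obtain ⟨x, hx, hxL⟩ := exists_injective_mem (ι := Fin t) (by simpa using hL)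
  obtain ⟨v, hv, hvQ⟩ := exists_injective_mem (ι := Fin t) (by simpa using hQ)
  simp only [mem_biUnion, id] at hxL
  choose F hFL hxF using hxL
  have hvF : ∀ i j, v i ∉ F j := fun i j => (hQL _ (hvQ i) _ (hFL j)).1
  have hxv : ∀ i j, x i ≠ v j := fun i j h => hvF j i (h ▸ hxF i)
  rw [containsBerge_matchingHG_iff]
  refine ⟨fun c => ![x c.1, v c.1] c.2, fun i => insert (v i) (F i), ?_, fun i j h => ?_,
    fun i => (hQL _ (hvQ i) _ (hFL i)).2, fun i j => ?_⟩
  · rintro ⟨i, j⟩ ⟨i', j'⟩ h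
    fin_cases j <;> fin_cases j' <;>
      simp only [Fin.zero_eta, Fin.isValue, Matrix.cons_val_zero, Fin.mk_one,
        Matrix.cons_val_one, Matrix.cons_val_fin_one] at h
    · rw [hx h]
    · exact absurd h (hxv _ _)
    · exact absurd h.symm (hxv _ _)
    · rw [hv h]
  · exact hv (eq_and_eq_of_insert_eq_insert (hvF i i) (hvF i j) h).1
  · fin_cases j
    · exact mem_insert_of_mem (hxF i)
    · exact mem_insert_self _ _

lemma containsBerge_completeBipartite_of_link_card
    (hQL : ∀ v ∈ Q, ∀ f ∈ L, v ∉ f ∧ insert v f ∈ H)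
    (hQ : q ≤ Q.card) (hL : p ≤ L.card) (hLp : ∀ f ∈ L, p ≤ f.card) :
    ContainsBerge (completeBipartite p q) H := by
  obtain ⟨F, hF, hFL⟩ := exists_injective_mem (ι := Fin p) (by simpa using hL)
  obtain ⟨y, hy, hyQ⟩ := exists_injective_mem (ι := Fin q) (by simpa using hQ)
  obtain ⟨x, hx, hxF⟩ :=
    exists_injective_mem_of_card_le_card F (by simpa using fun i => hLp _ (hFL i))
  have hyF : ∀ j i, y j ∉ F i := fun j i => (hQL _ (hyQ j) _ (hFL i)).1
  rw [containsBerge_completeBipartite_iff]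
  refine ⟨Sum.elim x y, fun c => insert (y c.2) (F c.1),
    hx.sumElim hy fun i j h => hyF j i (h ▸ hxF i), ?_,
    fun c => (hQL _ (hyQ _) _ (hFL _)).2,
    fun i j => ⟨mem_insert_of_mem (hxF i), mem_insert_self _ _⟩⟩
  rintro ⟨i, j⟩ ⟨i', j'⟩ h
  obtain ⟨hj, hi⟩ := eq_and_eq_of_insert_eq_insert (hyF j i) (hyF j i') h
  rw [hF hi, hy hj]

variable [Fintype V]

lemma containsBerge_completeBipartite_of_link_twoShadow
    (hQL : ∀ v ∈ Q, ∀ f ∈ L, v ∉ f ∧ insert v f ∈ H) (hQ : p * q ≤ Q.card)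
    (hL : ContainsCopy univ (completeBipartite p q) (twoShadow L)) :
    ContainsBerge (completeBipartite p q) H := by
  obtain ⟨g, hg, hgL⟩ := containsCopy_completeBipartite_twoShadow_iff.1 hL
  choose F hFL hgF using hgL
  obtain ⟨v, hv, hvQ⟩ := exists_injective_mem (ι := Fin p × Fin q) (by simpa using hQ)
  have hvF : ∀ c c' : Fin p × Fin q, v c ∉ F c'.1 c'.2 :=
    fun c c' => (hQL _ (hvQ c) _ (hFL _ _)).1
  rw [containsBerge_completeBipartite_iff]
  exact ⟨g, fun c => insert (v c) (F c.1 c.2), hg,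
    fun c c' h => hv (eq_and_eq_of_insert_eq_insert (hvF c c) (hvF c c') h).1,
    fun c => (hQL _ (hvQ _) _ (hFL _ _)).2,
    fun i j => ⟨mem_insert_of_mem (hgF i j).1, mem_insert_of_mem (hgF i j).2⟩⟩

lemma card_le_of_forall_mem_link (hp : 1 ≤ p) (hpq : p ≤ q) (hrpq : r = p + q)
    (hs : s ≤ Fintype.card V) (hu : IsUniform r H)
    (hM : ¬ ContainsBerge (matchingHG (s + 1)) H)
    (hK : ¬ ContainsBerge (completeBipartite p q) H)
    (hQL : ∀ v ∈ Q, ∀ f ∈ L, v ∉ f ∧ insert v f ∈ H)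
    (hQ : max (p * q) (s + 1) ≤ Q.card) :
    L.card ≤ min (p - 1) (exr s (r - 1) fun L =>
      ¬ ContainsCopy univ (completeBipartite p q) (twoShadow L)) := by
  obtain ⟨v, hv⟩ := card_pos.1 (by omega : 0 < Q.card)
  have hLu : IsUniform (r - 1) L := fun f hf => by
    have := hu _ (hQL v hv f hf).2
    rw [card_insert_of_notMem (hQL v hv f hf).1] at this
    omega
  refine le_min (not_lt.1 fun hL => hK ?_) (not_lt.1 fun hL => hK ?_)
  · exact containsBerge_completeBipartite_of_link_card hQL
      ((Nat.le_mul_of_pos_left q hp).trans ((le_max_left _ _).trans hQ)) (by omega)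
      fun f hf => by rw [hLu f hf]; omega
  · have hspan : (L.biUnion id).card ≤ s := not_lt.1 fun h =>
      hM (containsBerge_matchingHG_of_link hQL ((le_max_right _ _).trans hQ) h)
    exact containsBerge_completeBipartite_of_link_twoShadow hQL ((le_max_left _ _).trans hQ)
      (containsCopy_twoShadow_of_exr_lt hp (hp.trans hpq) hs hspan hLu hL)

end CommonLink

section Cone

variable {V : Type*} [Fintype V] [DecidableEq V] {S : Finset V} {L : Finset (Finset V)}
  {p q : ℕ}

def cone (S : Finset V) (L : Finset (Finset V)) : Finset (Finset V) :=
  (Sᶜ ×ˢ L).image fun x => insert x.1 x.2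

lemma mem_cone {e : Finset V} : e ∈ cone S L ↔ ∃ v ∉ S, ∃ f ∈ L, insert v f = e := by
  simp [cone, and_assoc]

lemma card_cone (hL : ∀ f ∈ L, f ⊆ S) : (cone S L).card = Sᶜ.card * L.card := by
  rw [cone, card_image_of_injOn, card_product]
  rintro ⟨v, f⟩ hvf ⟨v', f'⟩ hvf' h
  simp only [coe_product, Set.mem_prod, mem_coe, mem_compl] at hvf hvf'
  obtain ⟨rfl, rfl⟩ := eq_and_eq_of_insert_eq_insert (fun hv => hvf.1 (hL f hvf.2 hv))
    (fun hv => hvf.1 (hL f' hvf'.2 hv)) h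
  rfl

lemma isUniform_cone {k : ℕ} (hL : ∀ f ∈ L, f ⊆ S) (hu : IsUniform k L) :
    IsUniform (k + 1) (cone S L) := by
  intro e he
  obtain ⟨v, hv, f, hf, rfl⟩ := mem_cone.1 he
  rw [card_insert_of_notMem fun hvf => hv (hL f hf hvf), hu f hf]

lemma not_containsBerge_matchingHG_cone (hL : ∀ f ∈ L, f ⊆ S) :
    ¬ ContainsBerge (matchingHG (S.card + 1)) (cone S L) := by
  refine not_containsBerge_matchingHG_of_card_sdiff_le_one fun e he => ?_
  obtain ⟨v, -, f, hf, rfl⟩ := mem_cone.1 he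
  refine (card_le_card fun x hx => ?_).trans (card_singleton v).le
  simp only [mem_sdiff, mem_insert] at hx
  exact mem_singleton.2 (hx.1.resolve_right fun hxf => hx.2 (hL f hf hxf))

lemma card_le_card_of_mem_cone (hL : ∀ f ∈ L, f ⊆ S) {a : V} (ha : a ∉ S) {ι : Type*}
    [Fintype ι] {T : ι → Finset V} (hT : Injective T) (hTS : ∀ i, T i ∈ cone S L)
    (haT : ∀ i, a ∈ T i) : Fintype.card ι ≤ L.card := by
  have hmem : ∀ i, (T i).erase a ∈ L := fun i => by
    obtain ⟨v, -, f, hf, hT⟩ := mem_cone.1 (hTS i)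
    have hav : a = v := by
      have := haT i
      rw [← hT, mem_insert] at this
      exact this.resolve_right fun haf => ha (hL f hf haf)
    rw [← hT, hav, erase_insert fun hvf => ha (hav ▸ hL f hf hvf)]
    exact hf
  refine card_le_card_of_injOn (s := univ) (fun i => (T i).erase a) (fun i _ => hmem i)
    fun i _ i' _ h => hT ?_
  rw [← insert_erase (haT i), ← insert_erase (haT i')]
  exact congrArg (insert a) h

lemma not_containsBerge_completeBipartite_cone (hL : ∀ f ∈ L, f ⊆ S) (hLp : L.card < p)
    (hpq : p ≤ q) (hfree : ¬ ContainsCopy univ (completeBipartite p q) (twoShadow L)) :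
    ¬ ContainsBerge (completeBipartite p q) (cone S L) := by
  rw [containsBerge_completeBipartite_iff]
  rintro ⟨g, T, hg, hT, hTS, hgT⟩
  have hleft : ∀ i, g (.inl i) ∈ S := fun i => by
    by_contra hi
    have := card_le_card_of_mem_cone hL hi (T := fun j => T (i, j))
      (fun j j' h => (Prod.ext_iff.1 (hT h)).2) (fun j => hTS _) (fun j => (hgT i j).1)
    rw [Fintype.card_fin] at this
    omega
  have hright : ∀ j, g (.inr j) ∈ S := fun j => by
    by_contra hj
    have := card_le_card_of_mem_cone hL hj (T := fun i => T (i, j))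
      (fun i i' h => (Prod.ext_iff.1 (hT h)).1) (fun i => hTS _) (fun i => (hgT i j).2)
    rw [Fintype.card_fin] at this
    omega
  refine hfree (containsCopy_completeBipartite_twoShadow_iff.2 ⟨g, hg, fun i j => ?_⟩)
  obtain ⟨v, hv, f, hf, hvf⟩ := mem_cone.1 (hTS (i, j))
  have hgf : ∀ a, g a ∈ S → g a ∈ T (i, j) → g a ∈ f := fun a haS haT => by
    rw [← hvf, mem_insert] at haT
    exact haT.resolve_left fun h => hv (h ▸ haS)
  exact ⟨f, hf, hgf _ (hleft i) (hgT i j).1, hgf _ (hright j) (hgT i j).2⟩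

end Cone

lemma mul_sub_le_exr {s r p q : ℕ} (hp : 1 ≤ p) (hpq : p ≤ q) (hrpq : r = p + q) {n : ℕ}
    (hn : s ≤ n) :
    min (p - 1) (exr s (r - 1) fun L =>
        ¬ ContainsCopy univ (completeBipartite p q) (twoShadow L)) * (n - s) ≤
      exr n r fun H => ¬ ContainsBerge (matchingHG (s + 1)) H ∧
        ¬ ContainsBerge (completeBipartite p q) H := by
  have hq : 1 ≤ q := hp.trans hpq
  obtain ⟨G, hGu, hGfree, hGcard⟩ := exists_card_eq_exr (n := s) (r := r - 1)
    (Free := fun L => ¬ ContainsCopy univ (completeBipartite p q) (twoShadow L))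
    (not_containsCopy_completeBipartite_twoShadow_empty hp hq)
  obtain ⟨G', hG'G, hG'card⟩ := exists_subset_card_eq ((min_le_right (p - 1) _).trans hGcard.ge)
  set e := Fin.castLEEmb hn
  set L := G'.image fun f : Finset (Fin s) => f.map e
  have hL : ∀ f ∈ L, f ⊆ univ.map e := by
    simp only [L, forall_mem_image]
    exact fun f _ => map_subset_map.2 (subset_univ f)
  have hLcard : L.card = min (p - 1) (exr s (r - 1) fun L =>
      ¬ ContainsCopy univ (completeBipartite p q) (twoShadow L)) := by
    rw [card_image_of_injective _ (map_injective e), hG'card]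
  have hLfree : ¬ ContainsCopy univ (completeBipartite p q) (twoShadow L) := by
    rw [containsCopy_completeBipartite_twoShadow_image_map_iff hp hq,
      containsCopy_completeBipartite_twoShadow_iff]
    rintro ⟨g, hg, hgG'⟩
    exact hGfree (containsCopy_completeBipartite_twoShadow_iff.2
      ⟨g, hg, fun i j => (hgG' i j).imp fun f hf => ⟨hG'G hf.1, hf.2⟩⟩)
  have hLu : IsUniform (r - 1) L := by
    simp only [L, IsUniform, forall_mem_image, card_map]
    exact fun f hf => hGu f (hG'G hf)
  have hM : ¬ ContainsBerge (matchingHG (s + 1)) (cone (univ.map e) L) := by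
    have h := not_containsBerge_matchingHG_cone hL
    rwa [card_map, card_univ, Fintype.card_fin] at h
  have hcone := card_le_exr (Free := fun H => ¬ ContainsBerge (matchingHG (s + 1)) H ∧
      ¬ ContainsBerge (completeBipartite p q) H)
    (Nat.sub_add_cancel (by omega : 1 ≤ r) ▸ isUniform_cone hL hLu)
    ⟨hM, not_containsBerge_completeBipartite_cone hL (by omega) hpq hLfree⟩
  rwa [card_cone hL, card_compl, card_map, card_univ, Fintype.card_fin, Fintype.card_fin,
    hLcard, mul_comm] at hcone

section Link

variable {V : Type*} [Fintype V] [DecidableEq V] {H : Finset (Finset V)} {s r p q : ℕ}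

def link (H : Finset (Finset V)) (B : Finset V) (v : V) : Finset (Finset V) :=
  B.powerset.filter (insert v · ∈ H)

lemma card_le_card_powerset_add_sum_card_link_add (B : Finset V) :
    H.card ≤ 2 ^ B.card + ∑ v ∈ Bᶜ, (link H B v).card +
      (H.filter fun e => 2 ≤ (e \ B).card).card := by
  have hcover : H ⊆ B.powerset ∪ Bᶜ.biUnion (fun v => (link H B v).image (insert v)) ∪
      H.filter fun e => 2 ≤ (e \ B).card := by
    intro e he
    simp only [mem_union, mem_powerset, mem_biUnion, mem_compl, mem_image, link, mem_filter]
    rcases Nat.lt_or_ge (e \ B).card 2 with h | h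
    · rcases Nat.lt_or_ge (e \ B).card 1 with h' | h'
      · exact .inl (.inl (sdiff_eq_empty_iff_subset.1 (card_eq_zero.1 (by omega))))
      · obtain ⟨v, hv⟩ := card_eq_one.1 (by omega : (e \ B).card = 1)
        have hvB : v ∉ B := (mem_sdiff.1 (hv ▸ mem_singleton_self v)).2
        have hve : insert v (e ∩ B) = e := by
          rw [insert_eq, ← hv, sdiff_union_inter]
        exact .inl (.inr ⟨v, hvB, e ∩ B, ⟨inter_subset_right, by rwa [hve]⟩, hve⟩)
    · exact .inr ⟨he, h⟩
  calc H.card ≤ B.powerset.card + (Bᶜ.biUnion fun v => (link H B v).image (insert v)).card +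
        (H.filter fun e => 2 ≤ (e \ B).card).card :=
        (card_le_card hcover).trans
          ((card_union_le _ _).trans (by gcongr; exact card_union_le _ _))
    _ ≤ _ := by
        rw [card_powerset]
        gcongr
        exact card_biUnion_le.trans (sum_le_sum fun v _ => card_image_le)

lemma sum_card_link_le (hp : 1 ≤ p) (hpq : p ≤ q) (hrpq : r = p + q)
    (hs : s ≤ Fintype.card V) (hu : IsUniform r H)
    (hM : ¬ ContainsBerge (matchingHG (s + 1)) H)
    (hK : ¬ ContainsBerge (completeBipartite p q) H) (B : Finset V) :
    ∑ v ∈ Bᶜ, (link H B v).card ≤ min (p - 1) (exr s (r - 1) fun L =>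
        ¬ ContainsCopy univ (completeBipartite p q) (twoShadow L)) * Fintype.card V +
      2 ^ 2 ^ B.card * max (p * q) (s + 1) * 2 ^ B.card := by
  set m := min (p - 1) (exr s (r - 1) fun L =>
    ¬ ContainsCopy univ (completeBipartite p q) (twoShadow L))
  set N := max (p * q) (s + 1)
  have hlink : ∀ v, (link H B v).card ≤ 2 ^ B.card := fun v =>
    (card_le_card (filter_subset _ _)).trans (card_powerset B).le
  have hbad : (Bᶜ.filter fun v => m < (link H B v).card).card ≤ 2 ^ 2 ^ B.card * N := by
    by_contra! h
    obtain ⟨L, -, hL⟩ := exists_lt_card_fiber_of_mul_lt_card_of_maps_to (f := link H B)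
      (s := Bᶜ.filter fun v => m < (link H B v).card) (t := B.powerset.powerset) (n := N)
      (fun v _ => mem_powerset.2 (filter_subset _ _)) (by rwa [card_powerset, card_powerset])
    set Q := (Bᶜ.filter fun v => m < (link H B v).card).filter fun v => link H B v = L
    have hQ : ∀ v ∈ Q, v ∉ B ∧ m < (link H B v).card ∧ link H B v = L := by
      simp [Q, and_assoc]
    have hQL : ∀ v ∈ Q, ∀ f ∈ L, v ∉ f ∧ insert v f ∈ H := by
      intro v hv f hf
      rw [← (hQ v hv).2.2, link, mem_filter, mem_powerset] at hf
      exact ⟨fun hvf => (hQ v hv).1 (hf.1 hvf), hf.2⟩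
    obtain ⟨v, hv⟩ := card_pos.1 (by omega : 0 < Q.card)
    have := card_le_of_forall_mem_link hp hpq hrpq hs hu hM hK hQL hL.le
    have := (hQ v hv).2
    rw [this.2] at this
    omega
  rw [← sum_filter_add_sum_filter_not Bᶜ fun v => m < (link H B v).card]
  calc _ ≤ (Bᶜ.filter fun v => m < (link H B v).card).card * 2 ^ B.card +
        (Bᶜ.filter fun v => ¬ m < (link H B v).card).card * m := by
        gcongr
        · exact (sum_le_card_nsmul _ _ _ fun v _ => hlink v).trans_eq (smul_eq_mul _ _)
        · exact (sum_le_card_nsmul _ _ _ fun v hv => not_lt.1 (mem_filter.1 hv).2).trans_eq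
            (smul_eq_mul _ _)
    _ ≤ 2 ^ 2 ^ B.card * N * 2 ^ B.card + Fintype.card V * m := by
        gcongr
        exact card_le_univ _
    _ = _ := by ring

end Link

lemma exists_card_le_mul_add {s r p q : ℕ} (hp : 1 ≤ p) (hpq : p ≤ q) (hrpq : r = p + q) :
    ∃ C : ℕ, ∀ (V : Type*) [Fintype V] [DecidableEq V] (H : Finset (Finset V)),
      s ≤ Fintype.card V → IsUniform r H → ¬ ContainsBerge (matchingHG (s + 1)) H →
      ¬ ContainsBerge (completeBipartite p q) H →
      H.card ≤ min (p - 1) (exr s (r - 1) fun L =>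
        ¬ ContainsCopy univ (completeBipartite p q) (twoShadow L)) * Fintype.card V + C := by
  set D := s + 1 + 2 ^ (2 * (s + 1) + 1)
  refine ⟨2 ^ (2 * (s + 1)) + 2 ^ 2 ^ (2 * (s + 1)) * max (p * q) (s + 1) * 2 ^ (2 * (s + 1)) +
    (s + 1 + 2 * (s + 1) * D), fun V _ _ H hs hu hM hK => ?_⟩
  set B := univ.filter fun v => D ≤ degree H v
  have hB : B.card ≤ 2 * (s + 1) := card_highDegree_le hM
  have hE2 := card_filter_two_le_card_sdiff_le hM (B := B) (D := D) fun v hv => by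
    simp only [B, mem_filter, mem_univ, true_and, not_le] at hv
    exact hv.le
  have hlink := sum_card_link_le hp hpq hrpq hs hu hM hK B
  have hpow : 2 ^ B.card ≤ 2 ^ (2 * (s + 1)) := Nat.pow_le_pow_right two_pos hB
  have hbad : 2 ^ 2 ^ B.card * max (p * q) (s + 1) * 2 ^ B.card ≤
      2 ^ 2 ^ (2 * (s + 1)) * max (p * q) (s + 1) * 2 ^ (2 * (s + 1)) := by
    gcongr; omega
  linarith [card_le_card_powerset_add_sum_card_link_add (H := H) B]

theorem exr_berge_matching_and_berge_Kpq_ii_general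
    (s r p q : ℕ) (hp : 1 ≤ p) (hpq : p ≤ q)
    (hrpq : r = p + q) :
    ∃ K n₀ : ℕ, ∀ n : ℕ, n₀ ≤ n →
      |(exr n r (fun H => ¬ ContainsBerge (matchingHG (s + 1)) H ∧
          ¬ ContainsBerge (completeBipartite p q) H) : ℤ) -
        ((min (p - 1)
            (exr s (r - 1) (fun H =>
              ¬ ContainsCopy Finset.univ (completeBipartite p q) (twoShadow H))) * n
          : ℕ) : ℤ)| ≤ (K : ℤ) := by
  set m := min (p - 1) (exr s (r - 1) fun L =>
    ¬ ContainsCopy univ (completeBipartite p q) (twoShadow L)) with hm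
  obtain ⟨C, hC⟩ := exists_card_le_mul_add hp hpq hrpq
  refine ⟨m * s + C, s, fun n hn => ?_⟩
  have hlower := mul_sub_le_exr hp hpq hrpq hn
  have hupper : exr n r (fun H => ¬ ContainsBerge (matchingHG (s + 1)) H ∧
      ¬ ContainsBerge (completeBipartite p q) H) ≤ m * n + C :=
    exr_le ⟨not_containsBerge_empty ⟨_, mem_image_of_mem _ (mem_univ 0)⟩,
      not_containsBerge_empty
        ⟨_, mem_image_of_mem _ (mem_univ (⟨0, hp⟩, ⟨0, hp.trans hpq⟩))⟩⟩
      fun H hu hH => by simpa using hC (Fin n) H (by simpa using hn) hu hH.1 hH.2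
  rw [← hm, Nat.mul_sub] at hlower
  have := Nat.mul_le_mul_left m hn
  rw [abs_le]
  constructor <;> omega

/-- Theorem: for `1 ≤ p ≤ q`, `r ≥ 3` with `r = p+q ≤ s`,
`ex_r(n, BM_{s+1} ∪ BK_{p,q}) = min{p-1, g(s, r-1, p, q)}·n + O(1)`, where
`g(s, r-1, p, q)` is the maximum number of hyperedges of an `(r-1)`-graph on `s`
vertices whose `2`-shadow contains no `K_{p,q}`. -/
theorem exr_berge_matching_and_berge_Kpq_ii
    (s r p q : ℕ) (hs : 1 ≤ s) (hr : 3 ≤ r) (hp : 1 ≤ p) (hpq : p ≤ q)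
    (hrpq : r = p + q) (hrs : r ≤ s) :
    ∃ K n₀ : ℕ, ∀ n : ℕ, n₀ ≤ n →
      |(exr n r (fun H => ¬ ContainsBerge (matchingHG (s + 1)) H ∧
          ¬ ContainsBerge (completeBipartite p q) H) : ℤ) -
        ((min (p - 1)
            (exr s (r - 1) (fun H =>
              ¬ ContainsCopy Finset.univ (completeBipartite p q) (twoShadow H))) * n
          : ℕ) : ℤ)| ≤ (K : ℤ) :=
  exr_berge_matching_and_berge_Kpq_ii_general s r p q hp hpq hrpq
end

section
/- Fix integers s ≥ 1, r ≥ 2 and 1 ≤ p ≤ q with p+q < r ≤ s. Then for all sufficiently large n, ex_r(n, BM_{s+1} ∪ BK_{p,q}) ≤ s + C(2s, r) + C(2s, r−1)·(pq−1). -/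
/-!
Take a maximal Berge matching in `H`: `t ≤ s` hyperedges together with a set `B` of `2t`
distinguished vertices, two in each of them. Any other hyperedge has at most one vertex outside
`B`, for otherwise the matching would extend. Such a hyperedge either lies inside `B`, which
gives at most `C(2s, r)` hyperedges, or consists of an `(r-1)`-subset `S` of `B` and one further
vertex. Since `r - 1 ≥ p + q`, any `pq` distinct hyperedges through `S` form a Berge-`K_{p,q}`
(embed `K_{p,q}` into `S` and send its edges to those hyperedges), so each `S` lies in at most
`pq - 1` of them. The bound holds for every `n`.
-/

open Finset

section BergeCopies

variable {ι α V : Type*} [DecidableEq α] [DecidableEq V]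

lemma containsBerge_image_of_injective [Fintype ι] {f : ι → Finset α} (hf : f.Injective)
    {H : Finset (Finset V)} {g : α → V} (hg : g.Injective) {ψ : ι → Finset V}
    (hψ : ψ.Injective) (hψH : ∀ i, ψ i ∈ H) (hfψ : ∀ i, (f i).image g ⊆ ψ i) :
    ContainsBerge (univ.image f) H := by
  refine ⟨g, Function.extend f ψ fun _ => ∅, hg, ?_, ?_, ?_⟩
  · simp only [Set.InjOn, coe_image, coe_univ, Set.image_univ, Set.forall_mem_range,
      hf.extend_apply]
    intro i j hij
    rw [hψ hij]
  · simpa [hf.extend_apply] using hψH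
  · simpa [hf.extend_apply] using hfψ

lemma matchingEdge_injective (t : ℕ) :
    (fun i : Fin t => ({(i, 0), (i, 1)} : Finset (Fin t × Fin 2))).Injective := fun i j hij => by
  simpa using (Finset.ext_iff.1 hij (i, 0)).1

lemma bipartiteEdge_injective (p q : ℕ) :
    (fun x : Fin p × Fin q => ({.inl x.1, .inr x.2} : Finset (Fin p ⊕ Fin q))).Injective :=
  fun x y hxy => by
    have h1 := (Finset.ext_iff.1 hxy (.inl x.1)).1
    have h2 := (Finset.ext_iff.1 hxy (.inr x.2)).1
    simp only [mem_insert, mem_singleton, Sum.inl.injEq, Sum.inr.injEq, reduceCtorEq, or_false,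
      false_or, forall_const] at h1 h2
    exact Prod.ext h1 h2

lemma containsBerge_completeBipartite_of_forall_subset {p q : ℕ} {S : Finset V}
    {E H : Finset (Finset V)} (hS : p + q ≤ #S) (hE : p * q ≤ #E) (hEH : E ⊆ H)
    (hSE : ∀ e ∈ E, S ⊆ e) : ContainsBerge (completeBipartite p q) H := by
  obtain ⟨g⟩ : Nonempty (Fin p ⊕ Fin q ↪ S) :=
    Function.Embedding.nonempty_of_card_le (by simpa using hS)
  obtain ⟨ψ⟩ : Nonempty (Fin p × Fin q ↪ E) :=
    Function.Embedding.nonempty_of_card_le (by simpa using hE)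
  rw [completeBipartite, univ_product_univ]
  refine containsBerge_image_of_injective (bipartiteEdge_injective p q)
    (Subtype.val_injective.comp g.injective) (Subtype.val_injective.comp ψ.injective)
    (fun x => hEH (ψ x).2) fun x => ?_
  refine subset_trans ?_ (hSE _ (ψ x).2)
  simp [insert_subset_iff]

end BergeCopies

structure BergeMatching {V : Type*} (H : Finset (Finset V)) (t : ℕ) where
  edge : Fin t → Finset V
  vertex : Fin t × Fin 2 → V
  edge_injective : edge.Injective
  vertex_injective : vertex.Injective
  edge_mem : ∀ i, edge i ∈ H
  vertex_mem : ∀ i j, vertex (i, j) ∈ edge i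

namespace BergeMatching

variable {V : Type*} [DecidableEq V] {H : Finset (Finset V)} {t : ℕ}

lemma containsBerge (M : BergeMatching H t) : ContainsBerge (matchingHG t) H :=
  containsBerge_image_of_injective (matchingEdge_injective t) M.vertex_injective
    M.edge_injective M.edge_mem fun i => by
      simp [insert_subset_iff, M.vertex_mem]

def empty (H : Finset (Finset V)) : BergeMatching H 0 where
  edge := Fin.elim0
  vertex z := z.1.elim0
  edge_injective i := i.elim0
  vertex_injective z := z.1.elim0
  edge_mem i := i.elim0
  vertex_mem i := i.elim0

def extend (M : BergeMatching H t) {e : Finset V} (heH : e ∈ H)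
    (he : e ∉ Set.range M.edge) {x y : V} (hx : x ∈ e) (hy : y ∈ e) (hxy : x ≠ y)
    (hxM : x ∉ Set.range M.vertex) (hyM : y ∉ Set.range M.vertex) :
    BergeMatching H (t + 1) where
  edge := Fin.cons e M.edge
  vertex z := (Fin.cons (![x, y] z.2) fun i => M.vertex (i, z.2) : Fin (t + 1) → V) z.1
  edge_injective := Fin.cons_injective_iff.2 ⟨he, M.edge_injective⟩
  vertex_injective := by
    rintro ⟨a, j⟩ ⟨b, k⟩ h
    cases a using Fin.cases <;> cases b using Fin.cases <;>
      fin_cases j <;> fin_cases k <;> simp_all [eq_comm, M.vertex_injective.eq_iff]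
  edge_mem := Fin.cases heH M.edge_mem
  vertex_mem := by
    refine Fin.cases (fun j => ?_) fun i j => by simpa using M.vertex_mem i j
    fin_cases j <;> simpa

end BergeMatching

section Counting

variable {V : Type*} [DecidableEq V] {H : Finset (Finset V)}

/-- `E` and `B` are the hyperedges and the vertices of a maximal Berge matching: a hyperedge
outside `E` with two vertices outside `B` would extend it. -/
lemma exists_cover_of_not_containsBerge_matchingHG {s : ℕ}
    (hM : ¬ ContainsBerge (matchingHG (s + 1)) H) :
    ∃ (E : Finset (Finset V)) (B : Finset V), #E ≤ s ∧ #B ≤ 2 * s ∧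
      ∀ e ∈ H, e ∉ E → #(e \ B) ≤ 1 := by
  by_contra! hcover
  suffices ∀ t ≤ s + 1, Nonempty (BergeMatching H t) from
    hM (this (s + 1) le_rfl).some.containsBerge
  intro t ht
  induction t with
  | zero => exact ⟨BergeMatching.empty H⟩
  | succ t ih =>
    obtain ⟨M⟩ := ih (by omega)
    obtain ⟨e, heH, he, hB⟩ := hcover (univ.image M.edge) (univ.image M.vertex)
      (card_image_le.trans (by simpa using Nat.le_of_succ_le_succ ht))
      (card_image_le.trans (by simp only [card_univ, Fintype.card_prod, Fintype.card_fin]; omega))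
    obtain ⟨x, hx, y, hy, hxy⟩ := one_lt_card.1 hB
    rw [mem_sdiff, mem_image_univ_iff_mem_range] at hx hy
    rw [mem_image_univ_iff_mem_range] at he
    exact ⟨M.extend heH he hx.1 hy.1 hxy hx.2 hy.2⟩

lemma card_filter_card_inter_eq_le {p q k : ℕ}
    (hK : ¬ ContainsBerge (completeBipartite p q) H) (hk : p + q ≤ k) (B : Finset V) :
    #{e ∈ H | #(e ∩ B) = k} ≤ (#B).choose k * (p * q - 1) := by
  have hmaps : ∀ e ∈ {e ∈ H | #(e ∩ B) = k}, e ∩ B ∈ B.powersetCard k := fun e he =>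
    mem_powersetCard.2 ⟨inter_subset_right, (mem_filter.1 he).2⟩
  rw [card_eq_sum_card_fiberwise hmaps, ← card_powersetCard, ← smul_eq_mul]
  refine sum_le_card_nsmul _ _ _ fun S hS => Nat.le_sub_one_of_lt <| not_le.1 fun hfiber =>
    hK <| containsBerge_completeBipartite_of_forall_subset (S := S) ?_ hfiber
      ((filter_subset _ _).trans (filter_subset _ _)) fun e he => ?_
  · rw [(mem_powersetCard.1 hS).2]; exact hk
  · rw [← (mem_filter.1 he).2]; exact inter_subset_left

lemma card_le_of_cover {p q r : ℕ} {E : Finset (Finset V)} {B : Finset V}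
    (hU : IsUniform r H) (hK : ¬ ContainsBerge (completeBipartite p q) H) (hpqr : p + q < r)
    (hcover : ∀ e ∈ H, e ∉ E → #(e \ B) ≤ 1) :
    #H ≤ #E + (#B).choose r + (#B).choose (r - 1) * (p * q - 1) := by
  have hsplit : H ⊆ E ∪ {e ∈ H | e ⊆ B} ∪ {e ∈ H | #(e ∩ B) = r - 1} := by
    intro e he
    by_cases heE : e ∈ E
    · exact mem_union_left _ (mem_union_left _ heE)
    have hcard : #(e \ B) + #(e ∩ B) = r := (card_sdiff_add_card_inter e B).trans (hU e he)
    rcases Nat.le_one_iff_eq_zero_or_eq_one.1 (hcover e he heE) with h | h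
    · exact mem_union_left _ <| mem_union_right _ <|
        mem_filter.2 ⟨he, sdiff_eq_empty_iff_subset.1 (card_eq_zero.1 h)⟩
    · exact mem_union_right _ (mem_filter.2 ⟨he, by omega⟩)
  have hinside : {e ∈ H | e ⊆ B} ⊆ B.powersetCard r := fun e he =>
    mem_powersetCard.2 ⟨(mem_filter.1 he).2, hU e (mem_filter.1 he).1⟩
  calc #H ≤ #E + #{e ∈ H | e ⊆ B} + #{e ∈ H | #(e ∩ B) = r - 1} :=
        (card_le_card hsplit).trans <| (card_union_le _ _).trans <|
          Nat.add_le_add_right (card_union_le _ _) _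
    _ ≤ #E + (#B).choose r + (#B).choose (r - 1) * (p * q - 1) := by
        gcongr
        · simpa using card_le_card hinside
        · exact card_filter_card_inter_eq_le hK (by omega) B

end Counting

theorem exr_berge_matching_and_berge_Kpq_iii_general
    (s r p q : ℕ) (h1 : p + q < r) :
    ∃ n₀ : ℕ, ∀ n : ℕ, n₀ ≤ n →
      exr n r (fun H => ¬ ContainsBerge (matchingHG (s + 1)) H ∧
          ¬ ContainsBerge (completeBipartite p q) H) ≤
        s + Nat.choose (2 * s) r + Nat.choose (2 * s) (r - 1) * (p * q - 1) := by
  refine ⟨0, fun n _ => csSup_le' ?_⟩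
  rintro _ ⟨H, hU, ⟨hM, hK⟩, rfl⟩
  obtain ⟨E, B, hE, hB, hcover⟩ := exists_cover_of_not_containsBerge_matchingHG hM
  calc #H ≤ #E + (#B).choose r + (#B).choose (r - 1) * (p * q - 1) :=
        card_le_of_cover hU hK h1 hcover
    _ ≤ s + (2 * s).choose r + (2 * s).choose (r - 1) * (p * q - 1) := by
        gcongr

/-- Theorem: for `1 ≤ p ≤ q` with `p+q < r ≤ s`, for all sufficiently large `n`,
`ex_r(n, BM_{s+1} ∪ BK_{p,q}) ≤ s + C(2s, r) + C(2s, r-1)(pq-1)`. -/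
theorem exr_berge_matching_and_berge_Kpq_iii
    (s r p q : ℕ) (hs : 1 ≤ s) (hr : 2 ≤ r) (hp : 1 ≤ p) (hpq : p ≤ q)
    (h1 : p + q < r) (h2 : r ≤ s) :
    ∃ n₀ : ℕ, ∀ n : ℕ, n₀ ≤ n →
      exr n r (fun H => ¬ ContainsBerge (matchingHG (s + 1)) H ∧
          ¬ ContainsBerge (completeBipartite p q) H) ≤
        s + Nat.choose (2 * s) r + Nat.choose (2 * s) (r - 1) * (p * q - 1) :=
  exr_berge_matching_and_berge_Kpq_iii_general s r p q h1
end
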